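/- Let f be a partially hyperbolic diffeomorphism of a closed manifold M with one-dimensional center bundle E^c whose center foliation F^c is a C^1 foliation, and let {vol^c_x}_{x∈M} be the continuous disintegration of the Lebesgue measure of M along the center leaves, writing dvol^c_x(y) = φ(y) dvol|_{F^c(x)}(y). Suppose f preserves this disintegration, i.e. f_*(vol^c_x) = vol^c_{f(x)} for all x, and suppose there is K_1 > 0 with 1/K_1 < φ(y) < K_1 for all y ∈ M. Then for every p ∈ M and every integer n > 0, 1/K_1^2 ≤ ||D_p f^n|_{E^c}|| ≤ K_1^2. -/

import Mathlib

open MeasureTheory Filter Topology Set Function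

noncomputable section

/-- The `d`-dimensional torus `ℝ^d/ℤ^d`. -/
abbrev Torus (d : ℕ) := Fin d → AddCircle (1 : ℝ)

namespace PaperDyn

variable {d : ℕ}

/-- The canonical projection `ℝ^d → 𝕋^d`. -/
def tproj (x : Fin d → ℝ) : Torus d := fun i => (x i : AddCircle (1 : ℝ))

/-- The automorphism of the torus induced by an integer matrix. -/
def inducedMap (A : Matrix (Fin d) (Fin d) ℤ) : Torus d → Torus d :=
  fun x i => ∑ j, A i j • x j

/-- `F : ℝ^d → ℝ^d` is a lift of the torus map `f`. -/
def IsLift (F : (Fin d → ℝ) → Fin d → ℝ) (f : Torus d → Torus d) : Prop :=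
  ∀ x, tproj (F x) = f (tproj x)

/-- A linear Anosov automorphism: an integer matrix with determinant `±1` and
no eigenvalue of modulus one. -/
structure IsAnosovMatrix (A : Matrix (Fin d) (Fin d) ℤ) : Prop where
  unimodular : A.det = 1 ∨ A.det = -1
  hyperbolic : ∀ z ∈ (A.map ((↑) : ℤ → ℂ)).charpoly.roots, ‖z‖ ≠ 1

/-- The matrix `A` has simple real spectrum `μ 0, …, μ (d-1)` whose absolute
values are pairwise distinct. -/
def SimpleRealSpectrum (A : Matrix (Fin d) (Fin d) ℤ) (μ : Fin d → ℝ) : Prop :=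
  (A.map ((↑) : ℤ → ℝ)).charpoly = ∏ i, (Polynomial.X - Polynomial.C (μ i)) ∧
    Function.Injective fun i => |μ i|

/-- Irreducibility: the characteristic polynomial is irreducible over `ℚ`. -/
def IsIrreducibleMatrix (A : Matrix (Fin d) (Fin d) ℤ) : Prop :=
  Irreducible ((A.map ((↑) : ℤ → ℚ)).charpoly)

/-- The continuous linear map `v ↦ A v` on `ℝ^d`. -/
def mulVecCLM (A : Matrix (Fin d) (Fin d) ℤ) : (Fin d → ℝ) →L[ℝ] (Fin d → ℝ) :=
  LinearMap.toContinuousLinearMap ((A.map ((↑) : ℤ → ℝ)).mulVecLin)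

/-- `f` is a `C^n` diffeomorphism of the torus: it is invertible, and both `f`
and its inverse admit `C^n` lifts. -/
def IsCnDiffeo (n : ℕ∞) (f : Torus d → Torus d) : Prop :=
  ∃ (g : Torus d → Torus d) (F G : (Fin d → ℝ) → Fin d → ℝ),
    Function.LeftInverse g f ∧ Function.RightInverse g f ∧
    IsLift F f ∧ IsLift G g ∧ ContDiff ℝ n F ∧ ContDiff ℝ n G

/-- A `C^{1+ε}` map of `ℝ^d`: it is `C^1` with `ε`-Hölder derivative. -/
def IsC1HolderLift (ε : NNReal) (F : (Fin d → ℝ) → Fin d → ℝ) : Prop :=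
  ContDiff ℝ 1 F ∧ ∃ C : NNReal, HolderWith C ε (fderiv ℝ F)

/-- `f` is a `C^{1+ε}` diffeomorphism of the torus. -/
def IsC1HolderDiffeo (ε : NNReal) (f : Torus d → Torus d) : Prop :=
  ∃ (g : Torus d → Torus d) (F G : (Fin d → ℝ) → Fin d → ℝ),
    Function.LeftInverse g f ∧ Function.RightInverse g f ∧
    IsLift F f ∧ IsLift G g ∧ IsC1HolderLift ε F ∧ IsC1HolderLift ε G

/-- `f` is conjugate to `g` by a `C^{1+ε}` diffeomorphism, for some `ε > 0`. -/
def C1HolderConjugate (f g : Torus d → Torus d) : Prop :=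
  ∃ (ε : NNReal) (h : Torus d → Torus d),
    0 < ε ∧ IsC1HolderDiffeo ε h ∧ h ∘ f = g ∘ h

/-- `f` is conjugate to `g` by a `C^∞` diffeomorphism. -/
def SmoothlyConjugate (f g : Torus d → Torus d) : Prop :=
  ∃ h : Torus d → Torus d, IsCnDiffeo (⊤ : ℕ∞) h ∧ h ∘ f = g ∘ h

/-- `f` and `g` are homotopic. -/
def Homotopic (f g : Torus d → Torus d) : Prop :=
  ∃ H : ℝ → Torus d → Torus d,
    Continuous (fun p : ℝ × Torus d => H p.1 p.2) ∧ H 0 = f ∧ H 1 = g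

/-- `f` and `g` are isotopic (joined by a continuous path of homeomorphisms). -/
def Isotopic (f g : Torus d → Torus d) : Prop :=
  ∃ H : ℝ → Torus d → Torus d,
    Continuous (fun p : ℝ × Torus d => H p.1 p.2) ∧
    (∀ t, IsHomeomorph (H t)) ∧ H 0 = f ∧ H 1 = g

/-- `f` is `ε`-close to the linear automorphism induced by `A` in the `C^1`
topology (measured on a lift). -/
def C1CloseLinear (ε : ℝ) (A : Matrix (Fin d) (Fin d) ℤ) (f : Torus d → Torus d) : Prop :=
  ∃ F, IsLift F f ∧ ContDiff ℝ 1 F ∧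
    ∀ x, ‖F x - (A.map ((↑) : ℤ → ℝ)).mulVec x‖ ≤ ε ∧
      ‖fderiv ℝ F x - mulVecCLM A‖ ≤ ε

/-- The data exhibiting a torus diffeomorphism as Anosov: a `Df`-invariant
splitting `E^s ⊕ E^u`, with uniform contraction on `E^s` and uniform expansion
on `E^u`. -/
structure AnosovData (f : Torus d → Torus d) where
  F : (Fin d → ℝ) → Fin d → ℝ
  lift : IsLift F f
  smooth : ContDiff ℝ 1 F
  Es : Torus d → Submodule ℝ (Fin d → ℝ)
  Eu : Torus d → Submodule ℝ (Fin d → ℝ)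
  compl : ∀ p, IsCompl (Es p) (Eu p)
  invS : ∀ x v, v ∈ Es (tproj x) → fderiv ℝ F x v ∈ Es (f (tproj x))
  invU : ∀ x v, v ∈ Eu (tproj x) → fderiv ℝ F x v ∈ Eu (f (tproj x))
  Cst : ℝ
  lam : ℝ
  Cst_pos : 0 < Cst
  lam_pos : 0 < lam
  contractS : ∀ (n : ℕ) x v, v ∈ Es (tproj x) →
    ‖fderiv ℝ (F^[n]) x v‖ ≤ Cst * Real.exp (-lam * n) * ‖v‖
  expandU : ∀ (n : ℕ) x v, v ∈ Eu (tproj x) →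
    Cst⁻¹ * Real.exp (lam * n) * ‖v‖ ≤ ‖fderiv ℝ (F^[n]) x v‖

/-- `f` is an Anosov diffeomorphism of the torus. -/
def IsAnosov (f : Torus d → Torus d) : Prop := Nonempty (AnosovData f)

/-- The data exhibiting a torus diffeomorphism as partially hyperbolic:
a `Df`-invariant splitting `E^s ⊕ E^c ⊕ E^u` with pointwise dominated
contraction/expansion estimates. -/
structure PHData (f : Torus d → Torus d) where
  F : (Fin d → ℝ) → Fin d → ℝ
  lift : IsLift F f
  smooth : ContDiff ℝ 1 F
  Es : Torus d → Submodule ℝ (Fin d → ℝ)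
  Ec : Torus d → Submodule ℝ (Fin d → ℝ)
  Eu : Torus d → Submodule ℝ (Fin d → ℝ)
  compl : ∀ p, IsCompl (Es p) (Ec p ⊔ Eu p)
  disj : ∀ p, Disjoint (Ec p) (Eu p)
  invS : ∀ x v, v ∈ Es (tproj x) → fderiv ℝ F x v ∈ Es (f (tproj x))
  invC : ∀ x v, v ∈ Ec (tproj x) → fderiv ℝ F x v ∈ Ec (f (tproj x))
  invU : ∀ x v, v ∈ Eu (tproj x) → fderiv ℝ F x v ∈ Eu (f (tproj x))
  lam1 : Torus d → ℝ
  lam2 : Torus d → ℝ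
  lam3 : Torus d → ℝ
  lam4 : Torus d → ℝ
  bounds : ∀ p, 0 < lam1 p ∧ lam1 p < lam2 p ∧ lam2 p ≤ lam3 p ∧ lam3 p < lam4 p ∧
    lam1 p < 1 ∧ 1 < lam4 p
  estS : ∀ x v, v ∈ Es (tproj x) → ‖fderiv ℝ F x v‖ ≤ lam1 (tproj x) * ‖v‖
  estClow : ∀ x v, v ∈ Ec (tproj x) → lam2 (tproj x) * ‖v‖ ≤ ‖fderiv ℝ F x v‖
  estChigh : ∀ x v, v ∈ Ec (tproj x) → ‖fderiv ℝ F x v‖ ≤ lam3 (tproj x) * ‖v‖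
  estU : ∀ x v, v ∈ Eu (tproj x) → lam4 (tproj x) * ‖v‖ ≤ ‖fderiv ℝ F x v‖

/-- `f` is a partially hyperbolic diffeomorphism of the torus. -/
def IsPartiallyHyperbolic (f : Torus d → Torus d) : Prop := Nonempty (PHData f)

/-- `f` has Lyapunov exponents `χ 0, …, χ (d-1)` with respect to the volume,
realised on a measurable invariant splitting into one-dimensional subbundles
(Oseledets splitting). -/
def HasLyapunovSpectrum (f : Torus d → Torus d) (χ : Fin d → ℝ) : Prop :=
  ∃ (F : (Fin d → ℝ) → Fin d → ℝ) (E : Fin d → Torus d → Submodule ℝ (Fin d → ℝ)),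
    IsLift F f ∧ ContDiff ℝ 1 F ∧
    (∀ i x v, v ∈ E i (tproj x) → fderiv ℝ F x v ∈ E i (f (tproj x))) ∧
    (∀ p, (⨆ i, E i p) = ⊤) ∧
    (∀ i p, Module.finrank ℝ (E i p) = 1) ∧
    ∀ᵐ p ∂(volume : Measure (Torus d)), ∀ x, tproj x = p → ∀ i, ∀ v ∈ E i p, v ≠ 0 →
      Tendsto (fun n : ℕ => Real.log ‖fderiv ℝ (F^[n]) x v‖ / n) atTop (nhds (χ i))

/-- Two spectra agree (as unordered tuples with multiplicity). -/
def SameSpectrum (χ η : Fin d → ℝ) : Prop :=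
  Multiset.map χ Finset.univ.val = Multiset.map η Finset.univ.val

end PaperDyn
namespace PaperDyn

section Foliation

/-- The topological support of a measure. -/
def msupport {M : Type*} [TopologicalSpace M] [MeasurableSpace M] (μ : Measure M) : Set M :=
  {x | ∀ U : Set M, IsOpen U → x ∈ U → 0 < μ U}

/-- An expanding foliation (with uniformly `C^r` leaves) of a diffeomorphism
`f`: an `f`-invariant partition of `M` into leaves, equipped with the leafwise
Lebesgue (Riemannian) measures and the leafwise Jacobian of `f`, which is
uniformly larger than `1` (uniform expansion). -/
structure ExpFoliation (M : Type*) [TopologicalSpace M] [MeasurableSpace M]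
    (f : M → M) (r : ℝ) where
  leaf : M → Set M
  mem_leaf : ∀ x, x ∈ leaf x
  leaf_eq : ∀ x y, y ∈ leaf x → leaf y = leaf x
  invariant : ∀ x, f '' leaf x = leaf (f x)
  /-- the Jacobian `det (Df|_{T𝓕})` of `f` along the leaves -/
  jac : M → ℝ
  jac_cont : Continuous jac
  lam : ℝ
  lam_pos : 0 < lam
  expanding : ∀ x, Real.exp lam ≤ jac x
  /-- Lebesgue measure along the leaf through `x` -/
  leafMeasure : M → Measure M
  leafMeasure_null : ∀ x, leafMeasure x (leaf x)ᶜ = 0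
  leafMeasure_eq : ∀ x y, y ∈ leaf x → leafMeasure y = leafMeasure x
  leafMeasure_pos : ∀ x, ∀ U : Set M, IsOpen U → x ∈ U → 0 < leafMeasure x U
  jac_spec : ∀ x, ∀ s : Set M, s ⊆ leaf x → MeasurableSet s →
    leafMeasure (f x) (f '' s) = ∫⁻ y in s, ENNReal.ofReal (jac y) ∂(leafMeasure x)

/-- A one-dimensional expanding foliation: an expanding foliation together with
parametrisations of the leaves by arclength, so that the leafwise Lebesgue
measure is the arclength measure. -/
structure ExpFoliation1D (M : Type*) [TopologicalSpace M] [MeasurableSpace M]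
    (f : M → M) (r : ℝ) extends ExpFoliation M f r where
  param : M → ℝ → M
  param_zero : ∀ x, param x 0 = x
  param_cont : ∀ x, Continuous (param x)
  param_inj : ∀ x, Function.Injective (param x)
  param_range : ∀ x, Set.range (param x) = leaf x
  leafMeasure_param : ∀ x, leafMeasure x = Measure.map (param x) volume

variable {M : Type*} [TopologicalSpace M] [MeasurableSpace M] {f : M → M} {r : ℝ}

/-- A measurable partition subordinate to the expanding foliation `F`, together
with the Rokhlin disintegration of `μ` along it: `μ`-almost every piece is a
neighbourhood of its base point inside the corresponding leaf, the partition is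
refined by its `f`-preimage, and the iterated refinements generate the
partition into points. -/
structure SubPartition (F : ExpFoliation M f r) (μ : Measure M) where
  piece : M → Set M
  /-- the conditional measures of `μ` on the pieces -/
  cond : M → Measure M
  piece_meas : ∀ x, MeasurableSet (piece x)
  piece_mem : ∀ᵐ x ∂μ, x ∈ piece x
  piece_sub : ∀ᵐ x ∂μ, piece x ⊆ F.leaf x
  piece_nbhd : ∀ᵐ x ∂μ, ∃ U : Set M, IsOpen U ∧ x ∈ U ∧ U ∩ F.leaf x ⊆ piece x
  piece_eq : ∀ x y, y ∈ piece x → piece y = piece x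
  refines : ∀ᵐ x ∂μ, piece (f x) ⊆ f '' piece x
  generating : ∀ᵐ x ∂μ, (⋂ n : ℕ, (f^[n]) ⁻¹' piece (f^[n] x)) = {x}
  cond_prob : ∀ x, IsProbabilityMeasure (cond x)
  cond_null : ∀ᵐ x ∂μ, cond x (piece x)ᶜ = 0
  cond_eq : ∀ x y, y ∈ piece x → cond y = cond x
  cond_meas : ∀ s : Set M, MeasurableSet s → Measurable fun x => cond x s
  disint : ∀ s : Set M, MeasurableSet s → μ s = ∫⁻ x, cond x s ∂μ

/-- The conditional (partial) entropy `h_μ(f,𝓕) = H_μ(f⁻¹ξ ∣ ξ)` of `f` and `μ`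
along the expanding foliation, computed with the subordinate partition `P`. -/
def SubPartition.entropy {F : ExpFoliation M f r} {μ : Measure M}
    (P : SubPartition F μ) : ℝ :=
  ∫ x, -Real.log ((P.cond x (f ⁻¹' P.piece (f x))).toReal) ∂μ

/-- `μ` is a Gibbs expanding state along the expanding foliation `F`: it is an
`f`-invariant probability measure whose conditional measures along the pieces
of any subordinate partition are equivalent to leafwise Lebesgue measure. -/
def IsGibbs (F : ExpFoliation M f r) (μ : Measure M) : Prop :=
  IsProbabilityMeasure μ ∧ Measure.map f μ = μ ∧
    ∀ P : SubPartition F μ, ∀ᵐ x ∂μ,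
      P.cond x ≪ (F.leafMeasure x).restrict (P.piece x) ∧
      (F.leafMeasure x).restrict (P.piece x) ≪ P.cond x

/-- `det(Df^n|_{T_x𝓕})`, the Jacobian of `f^n` along the foliation. -/
def jacN (F : ExpFoliation M f r) (n : ℕ) (x : M) : ℝ :=
  ∏ i ∈ Finset.range n, F.jac (f^[i] x)

/-- A map `φ : ℝ → ℝ` is (uniformly) `C^r`, `r = ⌊r⌋ + {r}`, with constant `C`:
it is `C^⌊r⌋` and its `⌊r⌋`-th derivative is `{r}`-Hölder with constant `C`. -/
def UniformlyCr (r : ℝ) (C : NNReal) (φ : ℝ → ℝ) : Prop :=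
  ContDiff ℝ (⌊r⌋₊ : ℕ) φ ∧
    HolderWith C (Real.toNNReal (r - ⌊r⌋₊)) (iteratedDeriv ⌊r⌋₊ φ)

variable {M' : Type*} [TopologicalSpace M'] [MeasurableSpace M'] {g : M' → M'} {r' : ℝ}

/-- `P` is the lift of the subordinate partition `Q` through the fibration `π`. -/
def IsPartitionLift (π : M → M') {F : ExpFoliation M f r} {G : ExpFoliation M' g r'}
    {μ : Measure M} {ν : Measure M'} (P : SubPartition F μ) (Q : SubPartition G ν) : Prop :=
  ∀ x, π '' P.piece x = Q.piece (π x)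

/-- `μ` is `c`-invariant for `F` (relative to the fibration `π` and the base
foliation `G`): for every subordinate partition downstairs and every lift of it
upstairs, the conditional measures of `μ` project to the conditional measures
of `π_*μ`. -/
def CInvariant (π : M → M') (F : ExpFoliation M f r) (G : ExpFoliation M' g r')
    (μ : Measure M) (ν : Measure M') : Prop :=
  ∀ (Q : SubPartition G ν) (P : SubPartition F μ), IsPartitionLift π P Q →
    ∀ᵐ x ∂μ, Measure.map π (P.cond x) = Q.cond (π x)

end Foliation

end PaperDyn

/-!
Pushing the leafwise density forward along `f` gives, for every measurable piece `s` of a center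
leaf, `∫_s φ = ∫_{f s} φ = ∫_s (φ ∘ f) · jac_c`; as both integrands are continuous along the
arclength parametrisation, `φ = (φ ∘ f) · jac_c` everywhere. The center Jacobian is therefore a
coboundary, `∏_{i<n} jac_c (f^i p) = φ p / φ (f^n p)`, and the bounds on `φ` bound this quotient.
-/

open scoped ENNReal

theorem MeasureTheory.Measure.restrict_image_eq_map_withDensity
    {α β : Type*} [MeasurableSpace α] [MeasurableSpace β] {μ : Measure α} {ν : Measure β}
    {f : α → β} (hf : Measurable f) {J : α → ℝ≥0∞} {s : Set α} (hs : MeasurableSet s)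
    (hjac : ∀ t ⊆ s, MeasurableSet t → ν (f '' t) = ∫⁻ a in t, J a ∂μ) :
    ν.restrict (f '' s) = Measure.map f ((μ.restrict s).withDensity J) := by
  ext u hu
  rw [Measure.restrict_apply hu, Measure.map_apply hf hu, withDensity_apply _ (hf hu),
    Measure.restrict_restrict (hf hu), inter_comm u, ← image_inter_preimage, inter_comm]
  exact hjac _ inter_subset_right ((hf hu).inter hs)

theorem MeasureTheory.setLIntegral_image_eq_setLIntegral_mul
    {α β : Type*} [MeasurableSpace α] [MeasurableSpace β] {μ : Measure α} {ν : Measure β}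
    {f : α → β} (hf : Measurable f) {J : α → ℝ≥0∞} (hJ : Measurable J) {s : Set α}
    (hs : MeasurableSet s) (hjac : ∀ t ⊆ s, MeasurableSet t → ν (f '' t) = ∫⁻ a in t, J a ∂μ)
    {g : β → ℝ≥0∞} (hg : Measurable g) :
    ∫⁻ b in f '' s, g b ∂ν = ∫⁻ a in s, J a * g (f a) ∂μ := by
  rw [Measure.restrict_image_eq_map_withDensity hf hs hjac, lintegral_map hg hf]
  exact lintegral_withDensity_eq_lintegral_mul _ hJ (hg.comp hf)

theorem Continuous.eq_of_forall_setLIntegral_eq {X : Type*} [TopologicalSpace X]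
    [MeasurableSpace X] [OpensMeasurableSpace X] {μ : Measure X} [μ.IsOpenPosMeasure]
    [SigmaFinite μ] {g h : X → ℝ≥0∞} (hg : Continuous g) (hh : Continuous h)
    (H : ∀ s, MeasurableSet s → ∫⁻ x in s, g x ∂μ = ∫⁻ x in s, h x ∂μ) : g = h :=
  (hg.ae_eq_iff_eq μ hh).1 <|
    ae_eq_of_forall_setLIntegral_eq_of_sigmaFinite hg.measurable hh.measurable
      fun s hs _ => H s hs

theorem Continuous.comp_eq_of_forall_setLIntegral_map_eq {M : Type*} [TopologicalSpace M]
    [T2Space M] [MeasurableSpace M] [BorelSpace M] {p : ℝ → M} (hp : Continuous p)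
    (hp_inj : Injective p) {G H : M → ℝ≥0∞} (hG : Continuous G) (hH : Continuous H)
    (h : ∀ s ⊆ range p, MeasurableSet s →
      ∫⁻ y in s, G y ∂Measure.map p volume = ∫⁻ y in s, H y ∂Measure.map p volume) :
    G ∘ p = H ∘ p := by
  refine (hG.comp hp).eq_of_forall_setLIntegral_eq (μ := volume) (hH.comp hp) fun A hA => ?_
  have hpA := (hp.measurableEmbedding hp_inj).measurableSet_image' hA
  have := h (p '' A) (image_subset_range _ _) hpA
  rwa [setLIntegral_map hpA hG.measurable hp.measurable,
    setLIntegral_map hpA hH.measurable hp.measurable, hp_inj.preimage_image] at this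

theorem Homeomorph.density_eq_density_comp_mul_of_map_withDensity_eq {M : Type*}
    [TopologicalSpace M] [T2Space M] [MeasurableSpace M] [BorelSpace M] (f : M ≃ₜ M)
    {p : ℝ → M} (hp : Continuous p) (hp_inj : Injective p) {ν : Measure M} {J φ : M → ℝ}
    (hJ : Continuous J) (hφ : Continuous φ) (hφ_pos : ∀ y, 0 < φ y)
    (hjac : ∀ s ⊆ range p, MeasurableSet s →
      ν (f '' s) = ∫⁻ y in s, ENNReal.ofReal (J y) ∂Measure.map p volume)
    (hpres : Measure.map f ((Measure.map p volume).withDensity fun y => ENNReal.ofReal (φ y)) =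
      ν.withDensity fun y => ENNReal.ofReal (φ y))
    (t : ℝ) : φ (p t) = φ (f (p t)) * J (p t) := by
  have hφ_meas : Measurable fun y => ENNReal.ofReal (φ y) := hφ.measurable.ennreal_ofReal
  have hint : ∀ s ⊆ range p, MeasurableSet s →
      ∫⁻ y in s, ENNReal.ofReal (φ y) ∂Measure.map p volume =
        ∫⁻ y in s, ENNReal.ofReal (φ (f y) * J y) ∂Measure.map p volume := by
    intro s hsp hs
    have hfs := f.measurableEmbedding.measurableSet_image.2 hs
    calc ∫⁻ y in s, ENNReal.ofReal (φ y) ∂Measure.map p volume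
        = Measure.map f ((Measure.map p volume).withDensity fun y => ENNReal.ofReal (φ y))
            (f '' s) := by
          rw [f.measurableEmbedding.map_apply, f.injective.preimage_image, withDensity_apply _ hs]
      _ = ∫⁻ y in f '' s, ENNReal.ofReal (φ y) ∂ν := by rw [hpres, withDensity_apply _ hfs]
      _ = ∫⁻ y in s, ENNReal.ofReal (J y) * ENNReal.ofReal (φ (f y)) ∂Measure.map p volume :=
          setLIntegral_image_eq_setLIntegral_mul f.measurable hJ.measurable.ennreal_ofReal hs
            (fun u hu hum => hjac u (hu.trans hsp) hum) hφ_meas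
      _ = ∫⁻ y in s, ENNReal.ofReal (φ (f y) * J y) ∂Measure.map p volume := by
          simp only [mul_comm (ENNReal.ofReal (J _)), ENNReal.ofReal_mul (hφ_pos _).le]
  have h := congrFun (hp.comp_eq_of_forall_setLIntegral_map_eq hp_inj
    (ENNReal.continuous_ofReal.comp hφ)
    (ENNReal.continuous_ofReal.comp ((hφ.comp f.continuous).mul hJ)) hint) t
  simp only [comp_apply, Pi.mul_apply] at h
  have hpos : 0 < φ (f (p t)) * J (p t) :=
    ENNReal.ofReal_pos.1 (h ▸ ENNReal.ofReal_pos.2 (hφ_pos _))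
  exact (ENNReal.ofReal_eq_ofReal_iff (hφ_pos _).le hpos.le).1 h

theorem prod_range_mul_iterate_eq_of_forall_eq_mul {X α : Type*} [CommMonoid α] {f : X → X}
    {φ J : X → α} (h : ∀ x, φ x = φ (f x) * J x) (x : X) (n : ℕ) :
    (∏ i ∈ Finset.range n, J (f^[i] x)) * φ (f^[n] x) = φ x := by
  induction n with
  | zero => simp
  | succ n ih =>
    rw [Finset.prod_range_succ, iterate_succ_apply', mul_assoc, mul_comm (J _), ← h, ih]

theorem one_div_sq_le_div_and_div_le_sq {K a b : ℝ} (hK : 0 < K) (ha : 1 / K < a ∧ a < K)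
    (hb : 1 / K < b ∧ b < K) : 1 / K ^ 2 ≤ a / b ∧ a / b ≤ K ^ 2 := by
  have hb0 : 0 < b := (one_div_pos.2 hK).trans hb.1
  have ha1 : 1 < K * a := by rw [← div_lt_iff₀' hK]; exact ha.1
  have hb1 : 1 < K * b := by rw [← div_lt_iff₀' hK]; exact hb.1
  constructor
  · rw [div_le_div_iff₀ (by positivity) hb0]; nlinarith
  · rw [div_le_iff₀ hb0]; nlinarith

namespace PaperDyn

theorem neutral_center_of_invariant_disintegration_general
    {M : Type*} [MetricSpace M] [MeasureSpace M] [BorelSpace M]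
    (f fi : M → M)
    (hfinv : Function.LeftInverse fi f ∧ Function.RightInverse fi f)
    (hfc : Continuous f) (hfic : Continuous fi)
    -- the center foliation, a `C^1` one-dimensional `f`-invariant foliation
    (leafc : M → Set M)
    (paramc : M → ℝ → M)
    (hp0 : ∀ x, paramc x 0 = x)
    (hpcont : ∀ x, Continuous (paramc x))
    (hpinj : ∀ x, Function.Injective (paramc x))
    (hprange : ∀ x, Set.range (paramc x) = leafc x)
    -- leafwise Lebesgue (arclength) measure on the center leaves
    (leafMeasC : M → Measure M)
    (hlm : ∀ x, leafMeasC x = Measure.map (paramc x) volume)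
    -- `jacc x = ‖D_x f|_{E^c}‖`, the leafwise derivative of `f` along the
    -- (one-dimensional) center foliation
    (jacc : M → ℝ)
    (hjcont : Continuous jacc)
    (hjspec : ∀ x, ∀ s : Set M, s ⊆ leafc x → MeasurableSet s →
      leafMeasC (f x) (f '' s) = ∫⁻ y in s, ENNReal.ofReal (jacc y) ∂(leafMeasC x))
    -- the continuous disintegration `vol^c` of the Lebesgue measure along the
    -- center leaves, with density `φ` bounded between `1/K₁` and `K₁`
    (volc : M → Measure M) (φ : M → ℝ) (hφcont : Continuous φ)
    (hφdens : ∀ x, volc x = (leafMeasC x).withDensity fun y => ENNReal.ofReal (φ y))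
    (K₁ : ℝ) (hK₁pos : 0 < K₁)
    (hφbound : ∀ y, 1 / K₁ < φ y ∧ φ y < K₁)
    -- `f` preserves the disintegration
    (hpres : ∀ x, Measure.map f (volc x) = volc (f x)) :
    ∀ p : M, ∀ n : ℕ, 0 < n →
      1 / K₁ ^ 2 ≤ ∏ i ∈ Finset.range n, jacc (f^[i] p) ∧
      ∏ i ∈ Finset.range n, jacc (f^[i] p) ≤ K₁ ^ 2 := by
  intro p n _
  let e : M ≃ₜ M :=
    { toFun := f, invFun := fi, left_inv := hfinv.1, right_inv := hfinv.2,
      continuous_toFun := hfc, continuous_invFun := hfic }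
  have hφpos : ∀ y, 0 < φ y := fun y => (one_div_pos.2 hK₁pos).trans (hφbound y).1
  have hcocycle : ∀ x, φ x = φ (f x) * jacc x := by
    intro x
    have hjac := hjspec x
    have hpres_x := hpres x
    rw [hlm x, ← hprange x] at hjac
    rw [hφdens x, hφdens (f x), hlm x] at hpres_x
    have h := e.density_eq_density_comp_mul_of_map_withDensity_eq (hpcont x) (hpinj x) hjcont
      hφcont hφpos hjac hpres_x 0
    rwa [hp0] at h
  rw [eq_div_of_mul_eq (hφpos _).ne' (prod_range_mul_iterate_eq_of_forall_eq_mul hcocycle p n)]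
  exact one_div_sq_le_div_and_div_le_sq hK₁pos (hφbound p) (hφbound _)

/-- **Neutral center from an invariant disintegration.** Let `f` be a partially
hyperbolic diffeomorphism of a closed manifold with one-dimensional center
bundle whose center foliation is a `C^1` foliation, and let `{vol^c_x}` be the
continuous disintegration of the Lebesgue measure along the center leaves, with
density `φ` (with respect to the leafwise Lebesgue measure) satisfying
`1/K₁ < φ < K₁`.  If `f` preserves the disintegration, i.e.
`f_*(vol^c_x) = vol^c_{f x}` for all `x`, then for every `p` and `n > 0`,
`1/K₁² ≤ ‖D_p f^n|_{E^c}‖ ≤ K₁²` (the center derivative being the leafwise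
Jacobian `∏_{i<n} jac_c (f^i p)`). -/
theorem neutral_center_of_invariant_disintegration
    {M : Type*} [MetricSpace M] [CompactSpace M] [MeasureSpace M] [BorelSpace M]
    (f fi : M → M)
    (hfinv : Function.LeftInverse fi f ∧ Function.RightInverse fi f)
    (hfc : Continuous f) (hfic : Continuous fi)
    -- the center foliation, a `C^1` one-dimensional `f`-invariant foliation
    (leafc : M → Set M)
    (hmem : ∀ x, x ∈ leafc x)
    (hleq : ∀ x y, y ∈ leafc x → leafc y = leafc x)
    (hfleaf : ∀ x, f '' leafc x = leafc (f x))
    (paramc : M → ℝ → M)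
    (hp0 : ∀ x, paramc x 0 = x)
    (hpcont : ∀ x, Continuous (paramc x))
    (hpinj : ∀ x, Function.Injective (paramc x))
    (hprange : ∀ x, Set.range (paramc x) = leafc x)
    -- leafwise Lebesgue (arclength) measure on the center leaves
    (leafMeasC : M → Measure M)
    (hlm : ∀ x, leafMeasC x = Measure.map (paramc x) volume)
    (hlmeq : ∀ x y, y ∈ leafc x → leafMeasC y = leafMeasC x)
    -- `jacc x = ‖D_x f|_{E^c}‖`, the leafwise derivative of `f` along the
    -- (one-dimensional) center foliation
    (jacc : M → ℝ)
    (hjpos : ∀ x, 0 < jacc x) (hjcont : Continuous jacc)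
    (hjspec : ∀ x, ∀ s : Set M, s ⊆ leafc x → MeasurableSet s →
      leafMeasC (f x) (f '' s) = ∫⁻ y in s, ENNReal.ofReal (jacc y) ∂(leafMeasC x))
    -- partial hyperbolicity: the center direction is dominated by uniformly
    -- contracting and uniformly expanding invariant foliations
    (Fu : ExpFoliation M f 1) (Fs : ExpFoliation M fi 1)
    (θ : ℝ) (hθ0 : 0 < θ) (hθ : θ < 1)
    (hdom : ∀ x, (Fs.jac (f x))⁻¹ ≤ θ * jacc x ∧ jacc x ≤ θ * Fu.jac x)
    -- the continuous disintegration `vol^c` of the Lebesgue measure along the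
    -- center leaves, with density `φ` bounded between `1/K₁` and `K₁`
    (volc : M → Measure M) (φ : M → ℝ) (hφcont : Continuous φ)
    (hφdens : ∀ x, volc x = (leafMeasC x).withDensity fun y => ENNReal.ofReal (φ y))
    (hdisint : ∀ s : Set M, MeasurableSet s → volume s = ∫⁻ x, volc x s ∂volume)
    (K₁ : ℝ) (hK₁pos : 0 < K₁)
    (hφbound : ∀ y, 1 / K₁ < φ y ∧ φ y < K₁)
    -- `f` preserves the disintegration
    (hpres : ∀ x, Measure.map f (volc x) = volc (f x)) :
    ∀ p : M, ∀ n : ℕ, 0 < n →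
      1 / K₁ ^ 2 ≤ ∏ i ∈ Finset.range n, jacc (f^[i] p) ∧
      ∏ i ∈ Finset.range n, jacc (f^[i] p) ≤ K₁ ^ 2 :=
  neutral_center_of_invariant_disintegration_general f fi hfinv hfc hfic leafc paramc hp0 hpcont
    hpinj hprange leafMeasC hlm jacc hjcont hjspec volc φ hφcont hφdens K₁ hK₁pos hφbound hpres

end PaperDyn
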